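/- arXiv:1807.11360 — 2 statements merged into one kernel-verified Lean document; each statement's English description precedes it below -/
import Mathlib

section
/- Let q = p^e be a prime power and n a positive integer with 1 ≤ n ≤ q−1. If p does not divide n and q > (n² − n + 1)², then diam(D(q; 1, n)) = 3. -/
/-- `walkLen r k x y` means there is a directed walk of length exactly `k`
from `x` to `y` in the digraph with arc relation `r`. -/
def walkLen {V : Type*} (r : V → V → Prop) : ℕ → V → V → Prop
  | 0 => fun x y => x = y
  | k + 1 => fun x y => ∃ z, r x z ∧ walkLen r k z y

/-- The distance from `x` to `y`: the minimum length of a directed walk,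
`⊤` if `y` is not reachable from `x`. -/
noncomputable def ddist {V : Type*} (r : V → V → Prop) (x y : V) : ℕ∞ :=
  ⨅ n ∈ {n : ℕ | walkLen r n x y}, (n : ℕ∞)

/-- The diameter of the digraph: the maximum of distances over all ordered pairs. -/
noncomputable def ddiam {V : Type*} (r : V → V → Prop) : ℕ∞ :=
  ⨆ x, ⨆ y, ddist r x y

/-- A digraph is strong if every vertex is reachable from every vertex. -/
def IsStrongDigraph {V : Type*} (r : V → V → Prop) : Prop :=
  ∀ x y : V, ∃ n : ℕ, walkLen r n x y

/-- The arc relation of the monomial digraph `D(q; m, n)`: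
`(x₁, x₂) → (y₁, y₂)` iff `x₂ + y₂ = x₁ ^ m * y₁ ^ n`. -/
def monomialArc {F : Type*} [Field F] (m n : ℕ) (x y : F × F) : Prop :=
  x.2 + y.2 = x.1 ^ m * y.1 ^ n

/-!
A walk `(a₁, a₂) → (z, _) → (w, _) → (b₁, b₂)` of length three exists as soon as
`w b₁ⁿ - z wⁿ + a₁ zⁿ = b₂ + a₂` has a solution `(z, w)`. This is immediate unless
`b₁ = 0 ≠ a₁`, where one needs a point of `a zⁿ - z wⁿ = c`, i.e. (with `y = 1 / z`, `v = w / z`)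
some `y ≠ 0` for which `y (a - c yⁿ)` is an `n`-th power. If there were none, summing the
characters `χ` with `χⁿ = 1` over these values would give
`q - 1 = -∑_{χ ≠ 1} ∑_y χ(y (a - c yⁿ))`. Pushing `y ↦ yⁿ` forward turns each inner sum into a sum,
over the `n`-th roots `μ` of `χ`, of Jacobi sums `∑_u μ(u) χ(a - c u)` of absolute value at most
`√q`; so `q - 1 ≤ (n - 1) n √q`, which fails for `q > (n² - n + 1)²`. Three steps are needed,
since `(0, 0)` does not reach `(0, 1)` in fewer.
-/

open Finset
open scoped Classical

lemma card_filter_pow_eq_one_le {R : Type*} [CommRing R] [IsDomain R] [Fintype R] {n : ℕ}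
    (hn : n ≠ 0) : #{y : R | y ^ n = 1} ≤ n := by
  calc #{y : R | y ^ n = 1} ≤ (Polynomial.nthRoots n (1 : R)).toFinset.card := by
        refine card_le_card fun y hy => ?_
        rw [Multiset.mem_toFinset, Polynomial.mem_nthRoots (Nat.pos_of_ne_zero hn)]
        exact (mem_filter.mp hy).2
    _ ≤ n := (Multiset.toFinset_card_le _).trans (Polynomial.card_nthRoots n 1)

namespace MulChar

lemma norm_apply_le_one {R : Type*} [CommRing R] [Fintype Rˣ] (χ : MulChar R ℂ) (a : R) :
    ‖χ a‖ ≤ 1 := by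
  by_cases ha : IsUnit a
  · rw [← ha.unit_spec, ← coe_equivToUnitHom]
    exact (Complex.norm_eq_one_of_mem_rootsOfUnity (apply_mem_rootsOfUnity ha.unit)).le
  · simp [map_nonunit χ ha]

variable {F : Type*} [Field F] [Fintype F]

noncomputable instance : Fintype (MulChar F ℂ) := Fintype.ofFinite _

lemma sum_apply_eq_ite (χ : MulChar F ℂ) :
    ∑ x, χ x = if χ = 1 then (Fintype.card Fˣ : ℂ) else 0 := by
  split_ifs with hχ
  · rw [hχ, sum_one_eq_card_units]
  · exact sum_eq_zero_of_ne_one hχ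

lemma sum_mulChar_apply_eq_ite (x : F) :
    ∑ χ : MulChar F ℂ, χ x = if x = 1 then (Fintype.card Fˣ : ℂ) else 0 := by
  split_ifs with hx
  · simp [hx, ← Nat.card_eq_fintype_card, card_eq_card_units_of_hasEnoughRootsOfUnity]
  rcases eq_or_ne x 0 with rfl | hx0
  · simp
  -- evaluation at the unit `x` is a nontrivial character of the character group
  set η := (mulCharEquiv F ℂ).symm (Units.mk0 x hx0)
  have hη : η ≠ 1 := by
    rw [Ne, MulEquiv.map_eq_one_iff, ← Units.val_eq_one]
    exact hx
  simpa [η] using sum_eq_zero_of_ne_one hη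

variable {n : ℕ}

lemma sum_filter_pow_eq (hn : n ≠ 0) (χ : MulChar F ℂ) (u : F) :
    ∑ y with y ^ n = u, χ y = ∑ μ : MulChar F ℂ with μ ^ n = χ, μ u := by
  have hcard : (Fintype.card Fˣ : ℂ) ≠ 0 := by exact_mod_cast Fintype.card_ne_zero
  refine mul_left_cancel₀ hcard ?_
  -- both sides become `∑ y, ∑ μ, χ y * μ (u / y ^ n)`, by orthogonality in `μ` and in `y`
  calc (Fintype.card Fˣ : ℂ) * ∑ y with y ^ n = u, χ y
      = ∑ y, χ y * ∑ μ : MulChar F ℂ, μ (u * (y ^ n)⁻¹) := by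
        rw [mul_sum, sum_filter]
        refine sum_congr rfl fun y _ => ?_
        rcases eq_or_ne y 0 with rfl | hy
        · simp
        simp only [sum_mulChar_apply_eq_ite, mul_inv_eq_one₀ (pow_ne_zero n hy), eq_comm (a := u)]
        split_ifs <;> ring
    _ = ∑ μ : MulChar F ℂ, μ u * ∑ y, (χ * (μ ^ n)⁻¹) y := by
        simp_rw [mul_sum]
        rw [sum_comm]
        refine sum_congr rfl fun μ _ => sum_congr rfl fun y _ => ?_
        rw [mul_apply, inv_apply', pow_apply' _ hn, map_mul, ← inv_pow, map_pow]
        ring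
    _ = (Fintype.card Fˣ : ℂ) * ∑ μ : MulChar F ℂ with μ ^ n = χ, μ u := by
        rw [mul_sum, sum_filter]
        refine sum_congr rfl fun μ _ => ?_
        simp only [sum_apply_eq_ite, mul_inv_eq_one, eq_comm (a := χ)]
        split_ifs <;> ring

lemma card_filter_pow_eq_le (hn : n ≠ 0) (χ : MulChar F ℂ) :
    #{μ : MulChar F ℂ | μ ^ n = χ} ≤ n := by
  have key : (#{μ : MulChar F ℂ | μ ^ n = χ} : ℂ) = ∑ y with y ^ n = 1, χ y := by
    rw [sum_filter_pow_eq hn]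
    simp
  have hnorm : (#{μ : MulChar F ℂ | μ ^ n = χ} : ℝ) ≤ #{y : F | y ^ n = 1} := by
    calc (#{μ : MulChar F ℂ | μ ^ n = χ} : ℝ) = ‖∑ y with y ^ n = 1, χ y‖ := by
          rw [← key, Complex.norm_natCast]
      _ ≤ ∑ y with y ^ n = 1, ‖χ y‖ := norm_sum_le _ _
      _ ≤ ∑ y with y ^ n = 1, 1 := sum_le_sum fun y _ => norm_apply_le_one χ y
      _ = #{y : F | y ^ n = 1} := by simp
  have hroots : (#{y : F | y ^ n = 1} : ℝ) ≤ n := by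
    exact_mod_cast card_filter_pow_eq_one_le (R := F) hn
  exact_mod_cast hnorm.trans hroots

lemma sum_pow_eq_one_apply_eq_zero (hn : n ≠ 0) {t : F} (ht : ∀ v : F, v ^ n ≠ t) :
    ∑ χ : MulChar F ℂ with χ ^ n = 1, χ t = 0 := by
  rw [← sum_filter_pow_eq hn]
  simp [ht]

lemma sum_apply_mul_apply_pow (hn : n ≠ 0) (χ : MulChar F ℂ) (g : F → ℂ) :
    ∑ y, χ y * g (y ^ n) = ∑ μ : MulChar F ℂ with μ ^ n = χ, ∑ u, μ u * g u := by
  rw [← sum_fiberwise univ (· ^ n), sum_comm]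
  refine sum_congr rfl fun u _ => ?_
  rw [← sum_mul, ← sum_filter_pow_eq hn, sum_mul]
  exact sum_congr rfl fun y hy => by rw [(mem_filter.mp hy).2]

lemma norm_jacobiSum_le (α : MulChar F ℂ) {χ : MulChar F ℂ} (hχ : χ ≠ 1) :
    ‖jacobiSum α χ‖ ≤ √(Fintype.card F) := by
  have h1 : (1 : ℝ) ≤ √(Fintype.card F) :=
    Real.one_le_sqrt.mpr (by exact_mod_cast Fintype.card_pos)
  rcases eq_or_ne α 1 with rfl | hα
  · rw [jacobiSum_one_nontrivial hχ, norm_neg, norm_one]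
    exact h1
  rcases eq_or_ne (α * χ) 1 with hαχ | hαχ
  · rw [eq_inv_of_mul_eq_one_right hαχ, jacobiSum_nontrivial_inv hα, norm_neg]
    exact (norm_apply_le_one α _).trans h1
  have hchar : ringChar ℂ ≠ ringChar F := by
    rw [ringChar.eq_zero]
    exact (CharP.char_ne_zero_of_finite F (ringChar F)).symm
  have hconj : jacobiSum α⁻¹ χ⁻¹ = starRingEnd ℂ (jacobiSum α χ) := by
    simp only [jacobiSum, map_sum, map_mul, starRingEnd_apply, star_apply']
  have hJ := jacobiSum_mul_jacobiSum_inv hchar hα hχ hαχ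
  rw [hconj, Complex.mul_conj] at hJ
  rw [Complex.norm_def, (by exact_mod_cast hJ : Complex.normSq (jacobiSum α χ) = Fintype.card F)]

lemma norm_sum_apply_mul_apply_sub_mul_le (α : MulChar F ℂ) {χ : MulChar F ℂ} (hχ : χ ≠ 1)
    {a c : F} (ha : a ≠ 0) (hc : c ≠ 0) :
    ‖∑ u, α u * χ (a - c * u)‖ ≤ √(Fintype.card F) := by
  have hac : a / c ≠ 0 := div_ne_zero ha hc
  have hsubst : ∑ u, α u * χ (a - c * u) = α (a / c) * χ a * jacobiSum α χ := by
    rw [jacobiSum, mul_sum]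
    refine (Fintype.sum_bijective _ (mulLeft_bijective₀ _ hac) _ _ fun x => ?_).symm
    have : a - c * (a / c * x) = a * (1 - x) := by field_simp
    rw [this, map_mul, map_mul]
    ring
  rw [hsubst, norm_mul, norm_mul]
  calc ‖α (a / c)‖ * ‖χ a‖ * ‖jacobiSum α χ‖ ≤ 1 * 1 * √(Fintype.card F) := by
        gcongr
        exacts [norm_apply_le_one α _, norm_apply_le_one χ a, norm_jacobiSum_le α hχ]
    _ = √(Fintype.card F) := by ring

lemma norm_sum_apply_mul_sub_mul_pow_le (hn : n ≠ 0) {χ : MulChar F ℂ} (hχ : χ ≠ 1)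
    {a c : F} (ha : a ≠ 0) (hc : c ≠ 0) :
    ‖∑ y, χ (y * (a - c * y ^ n))‖ ≤ n * √(Fintype.card F) := by
  simp_rw [map_mul]
  rw [sum_apply_mul_apply_pow hn χ fun u => χ (a - c * u)]
  calc ‖∑ μ : MulChar F ℂ with μ ^ n = χ, ∑ u, μ u * χ (a - c * u)‖
      ≤ ∑ μ : MulChar F ℂ with μ ^ n = χ, ‖∑ u, μ u * χ (a - c * u)‖ := norm_sum_le _ _
    _ ≤ ∑ μ : MulChar F ℂ with μ ^ n = χ, √(Fintype.card F) :=
        sum_le_sum fun μ _ => norm_sum_apply_mul_apply_sub_mul_le μ hχ ha hc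
    _ ≤ n * √(Fintype.card F) := by
        rw [sum_const, nsmul_eq_mul]
        gcongr
        exact_mod_cast card_filter_pow_eq_le hn χ

end MulChar

section FiniteField

variable {F : Type*} [Field F] [Fintype F] {n : ℕ}

lemma card_sub_one_le_of_forall_ne_pow (hn : n ≠ 0) {a c : F} (ha : a ≠ 0) (hc : c ≠ 0)
    (hnone : ∀ y ≠ 0, ∀ v : F, v ^ n ≠ y * (a - c * y ^ n)) :
    (Fintype.card F : ℝ) - 1 ≤ (((n - 1) * n : ℕ) : ℝ) * √(Fintype.card F) := by
  set f : F → F := fun y => y * (a - c * y ^ n)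
  set S : Finset (MulChar F ℂ) := {χ | χ ^ n = 1}
  have hS : (1 : MulChar F ℂ) ∈ S := by simp [S]
  have hvanish : ∑ χ ∈ S, ∑ y, χ (f y) = 0 := by
    rw [sum_comm]
    refine sum_eq_zero fun y _ => ?_
    rcases eq_or_ne y 0 with rfl | hy
    · simp [f, MulChar.map_zero]
    · exact MulChar.sum_pow_eq_one_apply_eq_zero hn (hnone y hy)
  have htrivial : ∑ y, (1 : MulChar F ℂ) (f y) = Fintype.card Fˣ := by
    rw [← MulChar.sum_one_eq_card_units]
    refine sum_congr rfl fun y _ => ?_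
    rcases eq_or_ne y 0 with rfl | hy
    · simp [f]
    have hfy : f y ≠ 0 := fun h => hnone y hy 0 (by rw [zero_pow hn]; exact h.symm)
    rw [MulChar.one_apply hfy.isUnit, MulChar.one_apply hy.isUnit]
  have hcard : #(S.erase 1) ≤ n - 1 := by
    have : #S ≤ n := MulChar.card_filter_pow_eq_le hn 1
    rw [card_erase_of_mem hS]
    omega
  rw [← add_sum_erase S _ hS, htrivial] at hvanish
  calc (Fintype.card F : ℝ) - 1 = ‖(Fintype.card Fˣ : ℂ)‖ := by
        rw [Complex.norm_natCast, Fintype.card_units, Nat.cast_sub Fintype.card_pos, Nat.cast_one]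
    _ = ‖∑ χ ∈ S.erase 1, ∑ y, χ (f y)‖ := by rw [eq_neg_of_add_eq_zero_left hvanish, norm_neg]
    _ ≤ ∑ χ ∈ S.erase 1, ‖∑ y, χ (f y)‖ := norm_sum_le _ _
    _ ≤ ∑ χ ∈ S.erase 1, n * √(Fintype.card F) := sum_le_sum fun χ hχ =>
        MulChar.norm_sum_apply_mul_sub_mul_pow_le hn (ne_of_mem_erase hχ) ha hc
    _ ≤ (((n - 1) * n : ℕ) : ℝ) * √(Fintype.card F) := by
        rw [sum_const, nsmul_eq_mul, Nat.cast_mul, mul_assoc]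
        gcongr

lemma exists_ne_zero_pow_eq_mul_sub_mul_pow (hn : n ≠ 0) {a c : F} (ha : a ≠ 0) (hc : c ≠ 0)
    (hq : (n ^ 2 - n + 1) ^ 2 < Fintype.card F) :
    ∃ y ≠ 0, ∃ v : F, v ^ n = y * (a - c * y ^ n) := by
  by_contra! hnone
  have hbound := card_sub_one_le_of_forall_ne_pow hn ha hc hnone
  have hlt : (((n - 1) * n : ℕ) : ℝ) + 1 < √(Fintype.card F) := by
    rw [Real.lt_sqrt (by positivity)]
    rw [sq n, ← Nat.sub_one_mul] at hq
    exact_mod_cast hq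
  have hsq := Real.sq_sqrt (Nat.cast_nonneg (α := ℝ) (Fintype.card F))
  nlinarith [Real.sqrt_nonneg (Fintype.card F : ℝ)]

lemma exists_mul_pow_sub_mul_pow_eq (hn : n ≠ 0) {a : F} (ha : a ≠ 0) (c : F)
    (hq : (n ^ 2 - n + 1) ^ 2 < Fintype.card F) :
    ∃ z w : F, a * z ^ n - z * w ^ n = c := by
  rcases eq_or_ne c 0 with rfl | hc
  · exact ⟨0, 0, by simp [hn]⟩
  obtain ⟨y, hy, v, hv⟩ := exists_ne_zero_pow_eq_mul_sub_mul_pow hn ha hc hq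
  -- `y = 1 / z` and `v = w / z`
  refine ⟨y⁻¹, v * y⁻¹, ?_⟩
  rw [mul_pow, hv, inv_pow]
  field_simp
  ring

lemma exists_mul_pow_sub_mul_pow_add_mul_pow_eq (hn : n ≠ 0)
    (hq : (n ^ 2 - n + 1) ^ 2 < Fintype.card F) (a b c : F) :
    ∃ z w : F, w * b ^ n - z * w ^ n + a * z ^ n = c := by
  rcases ne_or_eq b 0 with hb | rfl
  · exact ⟨0, c / b ^ n, by field_simp; simp [hn]⟩
  rcases eq_or_ne a 0 with rfl | ha
  · exact ⟨-c, 1, by simp [hn]⟩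
  obtain ⟨z, w, h⟩ := exists_mul_pow_sub_mul_pow_eq hn ha c hq
  exact ⟨z, w, by rw [zero_pow hn, ← h]; ring⟩

end FiniteField

section MonomialDigraph

variable {F : Type*} [Field F] {n : ℕ}

lemma walkLen_monomialArc_three_of_eq {x u : F × F} {z w : F}
    (h : w * u.1 ^ n - z * w ^ n + x.1 * z ^ n = u.2 + x.2) :
    walkLen (monomialArc 1 n) 3 x u := by
  refine ⟨(z, x.1 * z ^ n - x.2), ?_, (w, z * w ^ n - (x.1 * z ^ n - x.2)), ?_, u, ?_, rfl⟩ <;>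
    simp only [monomialArc, pow_one]
  · ring
  · ring
  · linear_combination -h

lemma not_walkLen_monomialArc_lt_three (hn : n ≠ 0) {k : ℕ} (hk : k < 3) :
    ¬ walkLen (monomialArc 1 n) k ((0 : F), (0 : F)) (0, 1) := by
  interval_cases k <;> simp [walkLen, monomialArc, hn]

end MonomialDigraph

lemma ddiam_le_of_forall_walkLen {V : Type*} {r : V → V → Prop} {k : ℕ}
    (h : ∀ x y, walkLen r k x y) : ddiam r ≤ k :=
  iSup₂_le fun x y => iInf₂_le k (h x y)

lemma le_ddiam_of_forall_not_walkLen {V : Type*} {r : V → V → Prop} {k : ℕ} {x y : V}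
    (h : ∀ j < k, ¬ walkLen r j x y) : k ≤ ddiam r :=
  le_iSup₂_of_le x y <| le_iInf₂ fun j hj => by
    exact_mod_cast not_lt.mp fun hjk => h j hjk hj

theorem diam_eq_three_of_large_q_general {p e n : ℕ}
    (F : Type*) [Field F] [Fintype F] (hF : Fintype.card F = p ^ e)
    (hn1 : 1 ≤ n) (hq : (n ^ 2 - n + 1) ^ 2 < p ^ e) :
    ddiam (monomialArc (F := F) 1 n) = 3 := by
  have hn : n ≠ 0 := by omega
  refine le_antisymm (ddiam_le_of_forall_walkLen fun x u => ?_)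
    (le_ddiam_of_forall_not_walkLen fun k hk => not_walkLen_monomialArc_lt_three hn hk)
  obtain ⟨z, w, h⟩ :=
    exists_mul_pow_sub_mul_pow_add_mul_pow_eq hn (hF ▸ hq) x.1 u.1 (u.2 + x.2)
  exact walkLen_monomialArc_three_of_eq h

theorem diam_eq_three_of_large_q {p e n : ℕ} (hp : p.Prime) (he : 0 < e)
    (F : Type*) [Field F] [Fintype F] (hF : Fintype.card F = p ^ e)
    (hn1 : 1 ≤ n) (hn : n ≤ p ^ e - 1)
    (hpn : ¬ p ∣ n) (hq : (n ^ 2 - n + 1) ^ 2 < p ^ e) :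
    ddiam (monomialArc (F := F) 1 n) = 3 :=
  diam_eq_three_of_large_q_general F hF hn1 hq
end

section
/- Let p be a prime and 1 ≤ m ≤ n ≤ p−1. Then diam(D(p; m, n)) = 2p − 1 if and only if m = n = p−1. -/
section Digraph

variable {V W : Type*} {r : V → V → Prop} {r' : W → W → Prop}

theorem walkLen_one {x y : V} : walkLen r 1 x y ↔ r x y :=
  ⟨fun ⟨_, hxz, hzy⟩ => hzy ▸ hxz, fun h => ⟨y, h, rfl⟩⟩

theorem walkLen_add {k l : ℕ} {x y z : V} (hxy : walkLen r k x y) (hyz : walkLen r l y z) :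
    walkLen r (k + l) x z := by
  induction k generalizing x with
  | zero => rw [zero_add]; exact (show x = y from hxy) ▸ hyz
  | succ k ih =>
    obtain ⟨w, hxw, hwy⟩ := hxy
    rw [Nat.add_right_comm]
    exact ⟨w, hxw, ih hwy⟩

theorem walkLen_succ' {k : ℕ} {x z : V} :
    walkLen r (k + 1) x z ↔ ∃ y, walkLen r k x y ∧ r y z := by
  induction k generalizing x with
  | zero => exact ⟨fun ⟨y, hxy, hyz⟩ => ⟨x, rfl, (show y = z from hyz) ▸ hxy⟩,
      fun ⟨y, hxy, hyz⟩ => walkLen_one.2 ((show x = y from hxy) ▸ hyz)⟩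
  | succ k ih =>
    refine ⟨fun ⟨w, hxw, hwz⟩ => ?_, fun ⟨y, hxy, hyz⟩ => walkLen_add hxy (walkLen_one.2 hyz)⟩
    obtain ⟨y, hwy, hyz⟩ := ih.1 hwz
    exact ⟨y, ⟨w, hxw, hwy⟩, hyz⟩

theorem walkLen_symm (hr : ∀ a b, r a b → r b a) {k : ℕ} {x y : V} (h : walkLen r k x y) :
    walkLen r k y x := by
  induction k generalizing y with
  | zero => exact (show x = y from h).symm
  | succ k ih =>
    obtain ⟨z, hxz, hzy⟩ := walkLen_succ'.1 h
    exact ⟨z, hr _ _ hzy, ih hxz⟩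

theorem walkLen_map {f : V → W} (hf : ∀ a b, r a b → r' (f a) (f b)) {k : ℕ} {x y : V}
    (h : walkLen r k x y) : walkLen r' k (f x) (f y) := by
  induction k generalizing x with
  | zero => exact congrArg f h
  | succ k ih =>
    obtain ⟨z, hxz, hzy⟩ := h
    exact ⟨f z, hf x z hxz, ih hzy⟩

theorem ddist_le_of_walkLen {k : ℕ} {x y : V} (h : walkLen r k x y) : ddist r x y ≤ k :=
  iInf₂_le k h

theorem le_ddist_of_forall {c : ℕ} {x y : V} (h : ∀ k, walkLen r k x y → c ≤ k) :
    (c : ℕ∞) ≤ ddist r x y :=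
  le_iInf₂ fun k hk => Nat.cast_le.2 (h k hk)

theorem ddiam_le_of_forall {c : ℕ} (h : ∀ x y : V, ∃ k ≤ c, walkLen r k x y) :
    ddiam r ≤ c :=
  iSup₂_le fun x y =>
    let ⟨_, hk, hxy⟩ := h x y
    (ddist_le_of_walkLen hxy).trans (Nat.cast_le.2 hk)

theorem ddiam_eq_of_forall_of_exists {c : ℕ} (h : ∀ x y : V, ∃ k ≤ c, walkLen r k x y)
    (x y : V) (hxy : ∀ k, walkLen r k x y → c ≤ k) : ddiam r = c :=
  (ddiam_le_of_forall h).antisymm <|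
    (le_ddist_of_forall hxy).trans (le_iSup₂ (f := fun x y => ddist r x y) x y)

theorem ddist_map_le {f : V → W} (hf : ∀ a b, r a b → r' (f a) (f b)) (x y : V) :
    ddist r' (f x) (f y) ≤ ddist r x y :=
  le_iInf₂ fun _ hk => ddist_le_of_walkLen (walkLen_map hf hk)

theorem ddiam_congr (e : V ≃ W) (he : ∀ a b, r a b ↔ r' (e a) (e b)) : ddiam r = ddiam r' := by
  have hdist (x y : V) : ddist r' (e x) (e y) = ddist r x y := by
    refine (ddist_map_le (fun a b => (he a b).1) x y).antisymm ?_
    simpa using ddist_map_le (f := e.symm) (fun a b h => by simpa [he] using h) (e x) (e y)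
  unfold ddiam
  rw [← e.iSup_comp]
  refine iSup_congr fun x => ?_
  rw [← e.iSup_comp]
  simp only [hdist]

instance decidableRelWalkLen [Fintype V] [DecidableEq V] (s : V → V → Prop) [DecidableRel s] :
    ∀ k, DecidableRel (walkLen s k)
  | 0 => fun x y => decidable_of_iff (x = y) Iff.rfl
  | k + 1 => fun x y =>
    haveI := decidableRelWalkLen s k
    decidable_of_iff (∃ z, s x z ∧ walkLen s k z y) Iff.rfl

end Digraph

section MonomialArc

variable {F : Type*} [Field F] {m n : ℕ}

instance [DecidableEq F] : DecidableRel (monomialArc (F := F) m n) :=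
  fun _ _ => inferInstanceAs (Decidable (_ = _))

theorem monomialArc_symm (a b : F × F) : monomialArc m m a b → monomialArc m m b a := by
  unfold monomialArc
  intro h
  rw [add_comm, h, mul_comm]

theorem monomialArc_map_iff {L : Type*} [Field L] (φ : F ≃+* L) (a b : F × F) :
    monomialArc m n (Prod.map φ φ a) (Prod.map φ φ b) ↔ monomialArc m n a b := by
  simp only [monomialArc, Prod.map_fst, Prod.map_snd, ← map_pow, ← map_mul, ← map_add,
    φ.injective.eq_iff]

theorem walkLen_three_zero_zero (hm : m ≠ 0) (hn : n ≠ 0) (u v δ : F) :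
    walkLen (monomialArc m n) 3 (0, δ) (0, -(u ^ m * v ^ n) - δ) :=
  ⟨(u, -δ), by simp [monomialArc, hm], (v, u ^ m * v ^ n + δ), by simp [monomialArc],
    (0, -(u ^ m * v ^ n) - δ), by simp [monomialArc, hn], rfl⟩

end MonomialArc

def nonzeroIndicator {M : Type*} [Zero M] [DecidableEq M] (x : M) : ℤ := if x = 0 then 0 else 1

section Extremal

variable {p : ℕ} [Fact p.Prime]

local notation "Arc" => monomialArc (F := ZMod p) (p - 1) (p - 1)

theorem pow_card_sub_one_eq_nonzeroIndicator (x : ZMod p) :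
    x ^ (p - 1) = nonzeroIndicator x := by
  unfold nonzeroIndicator
  split_ifs with hx
  · simp [hx, Nat.sub_eq_zero_iff_le, (Fact.out : p.Prime).one_lt]
  · simp [ZMod.pow_card_sub_one_eq_one hx]

theorem monomialArc_card_sub_one_iff {x y α β : ZMod p} :
    Arc (x, α) (y, β) ↔ α + β = (nonzeroIndicator x * nonzeroIndicator y : ℤ) := by
  simp [monomialArc, pow_card_sub_one_eq_nonzeroIndicator]

theorem exists_int_offset_of_walkLen_zero {k : ℕ} {y α β : ZMod p}
    (h : walkLen Arc k (0, α) (y, β)) :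
    ∃ T : ℤ, β = (-1) ^ k * α + T ∧
      -(k + 1 : ℤ) ≤ 4 * T - 2 * nonzeroIndicator y ∧ 4 * T - 2 * nonzeroIndicator y ≤ k := by
  induction k generalizing y β with
  | zero =>
    obtain ⟨rfl, rfl⟩ := Prod.mk.inj h
    exact ⟨0, by simp, by simp [nonzeroIndicator]⟩
  | succ k ih =>
    obtain ⟨⟨z, γ⟩, hw, harc⟩ := walkLen_succ'.1 h
    obtain ⟨T, hγ, hlo, hhi⟩ := ih hw
    rw [monomialArc_card_sub_one_iff] at harc
    refine ⟨nonzeroIndicator z * nonzeroIndicator y - T, ?_, ?_⟩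
    · push_cast at harc ⊢
      linear_combination harc - hγ
    · unfold nonzeroIndicator at *
      push_cast
      split_ifs at * <;> omega

theorem not_walkLen_zero_one_of_le {h k : ℕ} (hp : p = 2 * h + 1) (hk : k ≤ 4 * h) :
    ¬ walkLen Arc k (0, 0) (1, (h + 1 : ℕ)) := by
  intro hw
  obtain ⟨T, hβ, hlo, hhi⟩ := exists_int_offset_of_walkLen_zero hw
  simp only [nonzeroIndicator, one_ne_zero, if_false] at hlo hhi
  have hdvd : (p : ℤ) ∣ T - (h + 1 : ℕ) := by
    rw [← ZMod.intCast_zmod_eq_zero_iff_dvd]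
    push_cast at hβ ⊢
    linear_combination -hβ
  have := Int.eq_zero_of_abs_lt_dvd hdvd (by rw [abs_lt]; push_cast; omega)
  omega

theorem walkLen_two (x y α : ZMod p) : walkLen Arc 2 (x, α) (y, α) :=
  ⟨(0, -α), by simp [monomialArc_card_sub_one_iff, nonzeroIndicator],
    (y, α), by simp [monomialArc_card_sub_one_iff, nonzeroIndicator], rfl⟩

theorem walkLen_four_add_one {x y : ZMod p} (hxy : x = 0 ∨ y ≠ 0) (α : ZMod p) :
    walkLen Arc 4 (x, α) (y, α + 1) := by
  rcases hxy with rfl | hy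
  · exact ⟨(1, -α), by simp [monomialArc_card_sub_one_iff, nonzeroIndicator],
      (1, α + 1), by simp [monomialArc_card_sub_one_iff, nonzeroIndicator],
      (0, -(α + 1)), by simp [monomialArc_card_sub_one_iff, nonzeroIndicator],
      (y, α + 1), by simp [monomialArc_card_sub_one_iff, nonzeroIndicator], rfl⟩
  · exact ⟨(0, -α), by simp [monomialArc_card_sub_one_iff, nonzeroIndicator],
      (0, α), by simp [monomialArc_card_sub_one_iff, nonzeroIndicator],
      (1, -α), by simp [monomialArc_card_sub_one_iff, nonzeroIndicator],
      (y, α + 1), by simp [monomialArc_card_sub_one_iff, nonzeroIndicator, hy], rfl⟩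

theorem walkLen_four_mul_add {x y : ZMod p} (hxy : x = 0 ∨ y ≠ 0) (α : ZMod p) (j : ℕ) :
    walkLen Arc (4 * (j + 1)) (x, α) (y, α + (j + 1)) := by
  induction j generalizing α with
  | zero => simpa using walkLen_four_add_one hxy α
  | succ j ih =>
    have hw := walkLen_add (walkLen_four_add_one (em (x = 0)) α) (ih (α + 1))
    convert hw using 2
    · ring
    · push_cast; ring

theorem exists_walkLen_le_of_eq_zero_iff {h : ℕ} (hp : p = 2 * h + 1) {x y : ZMod p}
    (hxy : x = 0 ↔ y = 0) (α β : ZMod p) : ∃ k ≤ 4 * h, walkLen Arc k (x, α) (y, β) := by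
  set e := (β - α).valMinAbs
  have he : (e : ZMod p) = β - α := ZMod.coe_valMinAbs _
  have hle : e.natAbs ≤ h := by
    have := ZMod.natAbs_valMinAbs_le (β - α)
    omega
  rcases lt_trichotomy e 0 with hneg | hzero | hpos
  · obtain ⟨j, hj⟩ : ∃ j : ℕ, e = -(j + 1) := ⟨e.natAbs - 1, by omega⟩
    have hα : α = β + (j + 1) := by
      rw [hj] at he
      push_cast at he
      linear_combination he
    refine ⟨4 * (j + 1), by omega, walkLen_symm monomialArc_symm ?_⟩
    exact hα ▸ walkLen_four_mul_add (by tauto) β j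
  · have := (Fact.out : p.Prime).two_le
    rw [hzero, Int.cast_zero, eq_comm, sub_eq_zero] at he
    exact ⟨2, by omega, he ▸ walkLen_two x y α⟩
  · obtain ⟨j, hj⟩ : ∃ j : ℕ, e = j + 1 := ⟨e.natAbs - 1, by omega⟩
    have hβ : β = α + (j + 1) := by
      rw [hj] at he
      push_cast at he
      linear_combination -he
    exact ⟨4 * (j + 1), by omega, hβ ▸ walkLen_four_mul_add (by tauto) α j⟩

theorem exists_walkLen_le_four_mul_add_one {h : ℕ} (hp : p = 2 * h + 1)
    (u v : ZMod p × ZMod p) : ∃ k ≤ 4 * h + 1, walkLen Arc k u v := by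
  obtain ⟨x, α⟩ := u
  obtain ⟨y, β⟩ := v
  by_cases hxy : x = 0 ↔ y = 0
  · obtain ⟨k, hk, hw⟩ := exists_walkLen_le_of_eq_zero_iff hp hxy α β
    exact ⟨k, by omega, hw⟩
  · have harc : Arc (x, α) (y, -α) := by
      rw [monomialArc_card_sub_one_iff]
      unfold nonzeroIndicator
      split_ifs <;> simp_all
    obtain ⟨k, hk, hw⟩ := exists_walkLen_le_of_eq_zero_iff hp Iff.rfl (-α) β
    exact ⟨1 + k, by omega, walkLen_add (walkLen_one.2 harc) hw⟩

theorem ddiam_card_sub_one_eq {h : ℕ} (hp : p = 2 * h + 1) : ddiam Arc = (4 * h + 1 : ℕ) :=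
  ddiam_eq_of_forall_of_exists (exists_walkLen_le_four_mul_add_one hp) _ _ fun _ hw =>
    not_lt.1 fun hk => not_walkLen_zero_one_of_le hp (by omega) hw

end Extremal

section NonExtremal

open Finset Pointwise

variable {p m n : ℕ}

def monomialValues (p m n : ℕ) [NeZero p] : Finset (ZMod p) :=
  univ.image fun uv : ZMod p × ZMod p => uv.1 ^ m * uv.2 ^ n

def offsets (p m n : ℕ) [NeZero p] : ℕ → Finset (ZMod p)
  | 0 => {0}
  | r + 1 => -(offsets p m n r + monomialValues p m n)

theorem pow_mem_monomialValues_left [NeZero p] (x : ZMod p) : x ^ m ∈ monomialValues p m n :=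
  mem_image.2 ⟨(x, 1), mem_univ _, by simp⟩

theorem pow_mem_monomialValues_right [NeZero p] (x : ZMod p) : x ^ n ∈ monomialValues p m n :=
  mem_image.2 ⟨(1, x), mem_univ _, by simp⟩

variable [Fact p.Prime]

theorem three_le_card_monomialValues (hm : m ≠ 0) (hmn : m ≤ n) (hn : n ≤ p - 1)
    (hne : ¬(m = p - 1 ∧ n = p - 1)) : 3 ≤ #(monomialValues p m n) := by
  obtain ⟨w, hw, hw0, hw1⟩ : ∃ w ∈ monomialValues p m n, w ≠ 0 ∧ w ≠ 1 := by
    obtain ⟨k, hk0, hk, hkmem⟩ :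
        ∃ k ≠ 0, k < p - 1 ∧ ∀ x : ZMod p, x ^ k ∈ monomialValues p m n := by
      by_cases hn' : n = p - 1
      · exact ⟨m, hm, by omega, pow_mem_monomialValues_left⟩
      · exact ⟨n, by omega, by omega, pow_mem_monomialValues_right⟩
    obtain ⟨x, hx⟩ := exists_pow_ne_one_of_isCyclic hk0
      (by rwa [Nat.card_eq_fintype_card, ZMod.card_units p] : k < Nat.card (ZMod p)ˣ)
    exact ⟨(x : ZMod p) ^ k, hkmem _, pow_ne_zero _ x.ne_zero,
      by simpa [← Units.val_pow_eq_pow_val, Units.val_eq_one] using hx⟩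
  have h0 := pow_mem_monomialValues_left (p := p) (m := m) (n := n) 0
  have h1 := pow_mem_monomialValues_left (p := p) (m := m) (n := n) 1
  rw [zero_pow hm] at h0
  rw [one_pow] at h1
  have hsub : {0, 1, w} ⊆ monomialValues p m n := by simp [insert_subset_iff, h0, h1, hw]
  exact (card_eq_three.2 ⟨0, 1, w, zero_ne_one, hw0.symm, hw1.symm, rfl⟩).ge.trans
    (card_le_card hsub)

theorem min_le_card_offsets (hR : 3 ≤ #(monomialValues p m n)) (r : ℕ) :
    min p (2 * r + 1) ≤ #(offsets p m n r) := by
  have hp := (Fact.out : p.Prime).two_le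
  induction r with
  | zero => simp [offsets]
  | succ r ih =>
    have hA : (offsets p m n r).Nonempty := card_pos.1 (by omega)
    have hR' : (monomialValues p m n).Nonempty := card_pos.1 (by omega)
    have := ZMod.cauchy_davenport Fact.out hA hR'
    rw [offsets, card_neg]
    omega

theorem walkLen_three_mul_of_mem_offsets (hm : m ≠ 0) (hn : n ≠ 0) {r : ℕ} {c : ZMod p}
    (hc : c ∈ offsets p m n r) (γ : ZMod p) :
    walkLen (monomialArc m n) (3 * r) (0, γ) (0, (-1) ^ r * γ + c) := by
  induction r generalizing c with
  | zero =>
    rw [offsets, mem_singleton] at hc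
    simp [hc]
    rfl
  | succ r ih =>
    rw [offsets, mem_neg] at hc
    obtain ⟨_, hs, rfl⟩ := hc
    obtain ⟨c', hc', ρ, hρ, rfl⟩ := mem_add.1 hs
    obtain ⟨⟨u, v⟩, -, rfl⟩ := mem_image.1 hρ
    have hw := walkLen_add (ih hc') (walkLen_three_zero_zero hm hn u v _)
    convert hw using 3 <;> ring

theorem offsets_eq_univ {h : ℕ} (hp : p = 2 * h + 1) (hR : 3 ≤ #(monomialValues p m n)) :
    offsets p m n h = univ :=
  eq_univ_of_card _ <| by
    have := min_le_card_offsets hR h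
    have := card_le_univ (offsets p m n h)
    rw [ZMod.card] at *
    omega

theorem walkLen_three_mul_add_two {h : ℕ} (hp : p = 2 * h + 1) (hm : m ≠ 0) (hn : n ≠ 0)
    (hR : 3 ≤ #(monomialValues p m n)) (u v : ZMod p × ZMod p) :
    walkLen (monomialArc m n) (3 * h + 2) u v := by
  obtain ⟨a, α⟩ := u
  obtain ⟨b, β⟩ := v
  have hc : -β + (-1) ^ h * α ∈ offsets p m n h := offsets_eq_univ hp hR ▸ mem_univ _
  have hfirst : monomialArc m n (a, α) (0, -α) := by simp [monomialArc, hn]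
  have hlast : monomialArc m n (0, (-1) ^ h * -α + (-β + (-1) ^ h * α)) (b, β) := by
    simp only [monomialArc, zero_pow hm, zero_mul]
    ring
  have hw := walkLen_add (walkLen_one.2 hfirst)
    (walkLen_add (walkLen_three_mul_of_mem_offsets hm hn hc (-α)) (walkLen_one.2 hlast))
  rwa [show 1 + (3 * h + 1) = 3 * h + 2 by ring] at hw

end NonExtremal

theorem ddiam_monomialArc_zmod_two : ddiam (monomialArc (F := ZMod 2) 1 1) = 3 :=
  ddiam_eq_of_forall_of_exists (by decide) (0, 0) (0, 1) fun k hk =>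
    not_lt.1 fun hlt => (by decide : ∀ k < 3, ¬ walkLen (monomialArc 1 1) k _ _) k hlt hk

theorem ddiam_monomialArc_zmod_three_le {n : ℕ} (hn : n = 1 ∨ n = 2) :
    ddiam (monomialArc (F := ZMod 3) 1 n) ≤ 3 := by
  refine ddiam_le_of_forall ?_
  rcases hn with rfl | rfl <;> decide

section Classification

variable {p m n : ℕ} [Fact p.Prime]

theorem ddiam_monomialArc_card_sub_one :
    ddiam (monomialArc (F := ZMod p) (p - 1) (p - 1)) = (2 * p - 1 : ℕ) := by
  rcases (Fact.out : p.Prime).eq_two_or_odd' with rfl | ⟨h, hp⟩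
  · exact ddiam_monomialArc_zmod_two
  · rw [ddiam_card_sub_one_eq hp]
    congr 2
    omega

theorem ddiam_monomialArc_lt (hm : 1 ≤ m) (hmn : m ≤ n) (hn : n ≤ p - 1)
    (hne : ¬(m = p - 1 ∧ n = p - 1)) :
    ddiam (monomialArc (F := ZMod p) m n) < (2 * p - 1 : ℕ) := by
  rcases (Fact.out : p.Prime).eq_two_or_odd' with rfl | ⟨h, hp⟩
  · omega
  obtain rfl | hh : h = 1 ∨ 2 ≤ h := by have := (Fact.out : p.Prime).two_le; omega
  · subst hp
    obtain rfl : m = 1 := by omega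
    exact (ddiam_monomialArc_zmod_three_le (by omega)).trans_lt (by norm_num)
  · have hR := three_le_card_monomialValues (by omega) hmn hn hne
    refine (ddiam_le_of_forall fun u v =>
      ⟨_, le_rfl, walkLen_three_mul_add_two hp (by omega) (by omega) hR u v⟩).trans_lt ?_
    exact_mod_cast (by omega : 3 * h + 2 < 2 * p - 1)

end Classification

theorem diam_eq_two_p_sub_one_iff {p m n : ℕ} (hp : p.Prime)
    (F : Type*) [Field F] [Fintype F] (hF : Fintype.card F = p)
    (hm : 1 ≤ m) (hmn : m ≤ n) (hn : n ≤ p - 1) :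
    ddiam (monomialArc (F := F) m n) = ((2 * p - 1 : ℕ) : ℕ∞) ↔
      m = p - 1 ∧ n = p - 1 := by
  have : Fact p.Prime := ⟨hp⟩
  let φ := ZMod.ringEquivOfPrime F hp hF
  rw [← ddiam_congr (φ.toEquiv.prodCongr φ.toEquiv) fun a b => (monomialArc_map_iff φ a b).symm]
  refine ⟨fun h => not_not.1 fun hne => (ddiam_monomialArc_lt hm hmn hn hne).ne h, ?_⟩
  rintro ⟨rfl, rfl⟩
  exact ddiam_monomialArc_card_sub_one
end
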